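/- Tail bound for averages of variables with stretched-exponential tails (Claim 3.12). Let (Ω, ℱ, ℙ) be a probability space, N ≥ 1 an integer, and X₁, …, X_N : Ω → ℝ nonnegative measurable random variables (not necessarily independent). Let c₁, c₂, α > 0 and assume that ℙ(X_i ≥ t) ≤ c₁·exp(−c₂·t^α) for every 1 ≤ i ≤ N and every t > 0. Then there exist constants C, c > 0, depending only on c₁, c₂ and α (in particular not on N), such that ℙ( (1/N)·∑_{i=1}^N X_i ≥ t ) ≤ C·exp(−c·t^α) for every t > 0. -/

import Mathlib

open MeasureTheory ProbabilityTheory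

noncomputable section

/-- Vertices of the lattice `ℤ^d`. -/
abbrev Vert (d : ℕ) := Fin d → ℤ

/-- Points of `ℝ^n` with the Euclidean norm. -/
abbrev Pt (n : ℕ) := EuclideanSpace ℝ (Fin n)

/-- Nearest-neighbour adjacency on `ℤ^d`: `‖u - v‖₁ = 1`. -/
abbrev adj {d : ℕ} (u v : Vert d) : Prop := (∑ i, |u i - v i|) = 1

/-- The Dirichlet energy `‖∇φ‖²_Λ`: the sum of `‖φ_u - φ_v‖²` over unordered
nearest-neighbour edges `{u,v}` meeting `Λ`, each counted once (realized as half
the corresponding sum over ordered pairs). -/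
def dirEnergy {d n : ℕ} (Λ : Finset (Vert d)) (φ : Vert d → Pt n) : ℝ :=
  (1 / 2) * ∑ᶠ u : Vert d, ∑ᶠ v : Vert d,
    if adj u v ∧ (u ∈ Λ ∨ v ∈ Λ) then ‖φ u - φ v‖ ^ 2 else 0

/-- The finite-volume Hamiltonian `H^{η,Λ}(φ)`. -/
def hamiltonian {d n : ℕ} (η : Vert d → Pt n → ℝ) (Λ : Finset (Vert d))
    (φ : Vert d → Pt n) : ℝ :=
  (1 / 2) * dirEnergy Λ φ + ∑ v ∈ Λ, η v (φ v)

/-- The Laplacian `(Δ_Λ φ)_v := ∑_{u ∼ v, {u,v} ∩ Λ ≠ ∅} (φ_u - φ_v)`. -/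
def lap {d n : ℕ} (Λ : Finset (Vert d)) (φ : Vert d → Pt n) (v : Vert d) : Pt n :=
  ∑ᶠ u : Vert d, if adj u v ∧ (u ∈ Λ ∨ v ∈ Λ) then φ u - φ v else 0

/-- The pairing `(φ, ψ) := ∑_v φ_v ⬝ ψ_v` (for finitely supported `ψ`). -/
def pairing {d n : ℕ} (φ ψ : Vert d → Pt n) : ℝ :=
  ∑ᶠ v : Vert d, (inner ℝ (φ v) (ψ v) : ℝ)

/-- The shifted-and-recentered environment `η^s(v,t) := η(v, t - s_v) - η(v, -s_v)`. -/
def shiftEnv {d n : ℕ} (η : Vert d → Pt n → ℝ) (s : Vert d → Pt n) :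
    Vert d → Pt n → ℝ :=
  fun v t => η v (t - s v) - η v (-s v)

/-- The box `Λ_L = {-L, …, L}^d`. -/
def box (d : ℕ) (L : ℤ) : Finset (Vert d) :=
  Fintype.piFinset fun _ : Fin d => Finset.Icc (-L) L

/-- The fractional Brownian covariance `K(t,s) = (‖t‖^{2H} + ‖s‖^{2H} - ‖t-s‖^{2H})/2`. -/
def fbmCov (H : ℝ) {n : ℕ} (t s : Pt n) : ℝ :=
  (‖t‖ ^ (2 * H) + ‖s‖ ^ (2 * H) - ‖t - s‖ ^ (2 * H)) / 2

/-- A fractional Brownian disorder of Hurst parameter `H`. -/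
def IsFBMDisorder (d n : ℕ) (H : ℝ) {Ω : Type*} [MeasurableSpace Ω]
    (P : Measure Ω) (η : Ω → Vert d → Pt n → ℝ) : Prop :=
  (∀ v t, Measurable fun ω => η ω v t) ∧
  (∀ᵐ ω ∂P, ∀ v, Continuous (η ω v) ∧ η ω v 0 = 0) ∧
  iIndepFun
    (fun v ω => η ω v) P ∧
  ∀ (v : Vert d) (k : ℕ) (t : Fin k → Pt n) (c : Fin k → ℝ),
    P.map (fun ω => ∑ i, c i * η ω v (t i)) =
      gaussianReal 0 (Real.toNNReal (∑ i, ∑ j, c i * c j * fbmCov H (t i) (t j)))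

/-- A ground configuration (minimal surface) in a finite set `Λ` with zero
boundary values. -/
def IsGroundConfig {d n : ℕ} {Ω : Type*} [MeasurableSpace Ω] (P : Measure Ω)
    (η : Ω → Vert d → Pt n → ℝ) (Λ : Finset (Vert d)) (φ : Ω → Vert d → Pt n) : Prop :=
  Measurable φ ∧
  ∀ᵐ ω ∂P, (∀ v ∉ Λ, φ ω v = 0) ∧
    ∀ ψ : Vert d → Pt n, (∀ v ∉ Λ, ψ v = 0) →
      hamiltonian (η ω) Λ (φ ω) ≤ hamiltonian (η ω) Λ ψ

/-- The ground energy `GE^{η,Λ}`. -/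
def groundEnergy {d n : ℕ} {Ω : Type*} [MeasurableSpace Ω]
    (η : Ω → Vert d → Pt n → ℝ) (Λ : Finset (Vert d)) (φ : Ω → Vert d → Pt n)
    (ω : Ω) : ℝ :=
  hamiltonian (η ω) Λ (φ ω)

open Finset Real

/-! If the average is at least `t`, then at some dyadic level `k` at least a `4⁻ᵏ` fraction of the
variables exceed `2ᵏ t / 4`: otherwise cutting each variable into dyadic layers bounds the sum by
`3 N t / 4`. Markov's inequality for the number of exceedances bounds the probability of level
`k` by `4ᵏ c₁ exp (-c₂ (2ᵏ t / 4) ^ α)`; once `c₂ (t / 4) ^ α ≥ 3 / α`, the growth of `(2ᵏ) ^ α`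
beats the factor `4ᵏ` and the union bound over the levels is dominated by a geometric series.
Small `t` is absorbed into the constant. -/

lemma four_pow_mul_exp_neg_le {α u : ℝ} (hα : 0 < α) (hu : 3 / α ≤ u) (k : ℕ) :
    4 ^ k * exp (-((2 ^ k : ℝ) ^ α * u)) ≤ exp (-u) * (1 / 2) ^ k := by
  have hu0 : 0 < u := (by positivity : (0:ℝ) < 3 / α).trans_le hu
  have hαu : 3 ≤ α * u := by rwa [div_le_iff₀' hα] at hu
  have h2α : α * log 2 ≤ 2 ^ α - 1 := by
    rw [rpow_def_of_pos two_pos, mul_comm]; linarith [add_one_le_exp (log 2 * α)]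
  have hbern : 1 + k * (2 ^ α - 1) ≤ ((2 : ℝ) ^ α) ^ k := by
    have h2α_pos : 0 < (2 : ℝ) ^ α := rpow_pos_of_pos two_pos α
    simpa using one_add_mul_le_pow (by linarith : (-2 : ℝ) ≤ 2 ^ α - 1) k
  have hgrowth : u + k * log 8 ≤ (2 ^ k : ℝ) ^ α * u := by
    calc u + k * log 8 = u + k * log 2 * 3 := by
          rw [show (8 : ℝ) = 2 ^ 3 by norm_num, log_pow]; push_cast; ring
      _ ≤ u + k * log 2 * (α * u) := by gcongr
      _ = u + k * ((α * log 2) * u) := by ring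
      _ ≤ u + k * ((2 ^ α - 1) * u) := by gcongr
      _ = (1 + k * (2 ^ α - 1)) * u := by ring
      _ ≤ (2 ^ k : ℝ) ^ α * u := by rw [← rpow_pow_comm zero_le_two]; gcongr
  calc 4 ^ k * exp (-((2 ^ k : ℝ) ^ α * u))
      ≤ 4 ^ k * exp (-(u + k * log 8)) := by gcongr
    _ = exp (-u) * (1 / 2) ^ k := by
        rw [neg_add, exp_add, exp_neg (k * log 8), exp_nat_mul, exp_log (by norm_num)]
        rw [show (8 : ℝ) ^ k = 4 ^ k * 2 ^ k by rw [← mul_pow]; norm_num]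
        field_simp
        rw [← mul_pow]; norm_num

lemma sum_four_pow_mul_exp_neg_le {α u : ℝ} (hα : 0 < α) (hu : 3 / α ≤ u) (n : ℕ) :
    ∑ k ∈ range n, 4 ^ k * exp (-((2 ^ k : ℝ) ^ α * u)) ≤ 2 * exp (-u) :=
  calc ∑ k ∈ range n, 4 ^ k * exp (-((2 ^ k : ℝ) ^ α * u))
      ≤ ∑ k ∈ range n, exp (-u) * (1 / 2) ^ k :=
        sum_le_sum fun k _ => four_pow_mul_exp_neg_le hα hu k
    _ ≤ 2 * exp (-u) := by
        rw [← mul_sum, mul_comm]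
        exact mul_le_mul_of_nonneg_right (sum_geometric_two_le n) (exp_pos _).le

section DyadicLevels

variable {ι : Type*} [Fintype ι]

lemma le_add_sum_dyadic_indicator {s a : ℝ} (hs : 0 < s) {K : ℕ} (haK : a < 2 ^ K * s) :
    a ≤ s + s * ∑ j ∈ range K, 2 ^ j * if 2 ^ j * s ≤ a then (1 : ℝ) else 0 := by
  induction K with
  | zero => simpa using haK.le
  | succ K ih =>
    rw [sum_range_succ]
    by_cases hK : a < 2 ^ K * s
    · have : 0 ≤ s * (2 ^ K * if 2 ^ K * s ≤ a then (1 : ℝ) else 0) := by positivity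
      linarith [ih hK]
    · have hall : ∀ j ∈ range K, (2 ^ j * if 2 ^ j * s ≤ a then (1 : ℝ) else 0) = 2 ^ j := by
        intro j hj
        have : (2 : ℝ) ^ j ≤ 2 ^ K := pow_le_pow_right₀ one_le_two (mem_range.mp hj).le
        rw [if_pos (by nlinarith), mul_one]
      rw [sum_congr rfl hall, if_pos (not_lt.mp hK), mul_one,
        geom_sum_eq (by norm_num : (2 : ℝ) ≠ 1)]
      rw [pow_succ] at haK
      linarith

lemma sum_le_dyadic_counts (x : ι → ℝ) {s : ℝ} (hs : 0 < s) {K : ℕ}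
    (hK : ∀ i, x i < 2 ^ K * s) :
    ∑ i, x i ≤ s * Fintype.card ι + s * ∑ j ∈ range K, 2 ^ j * (#{i | 2 ^ j * s ≤ x i} : ℝ) := by
  calc ∑ i, x i
      ≤ ∑ i, (s + s * ∑ j ∈ range K, 2 ^ j * if 2 ^ j * s ≤ x i then (1 : ℝ) else 0) :=
        sum_le_sum fun i _ => le_add_sum_dyadic_indicator hs (hK i)
    _ = _ := by
        simp only [natCast_card_filter, mul_sum, sum_add_distrib, sum_const, card_univ,
          nsmul_eq_mul]
        rw [sum_comm]
        ring

lemma exists_dyadic_level (x : ι → ℝ) {s : ℝ} (hs : 0 < s)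
    (hx : 4 * s * Fintype.card ι ≤ ∑ i, x i) :
    ∃ k ≤ Fintype.card ι, (Fintype.card ι : ℝ) / 4 ^ k ≤ #{i | 2 ^ k * s ≤ x i} := by
  set N := Fintype.card ι
  by_contra! h
  have hN : (0 : ℝ) < N := by simpa using (h 0 N.zero_le).trans_le' (Nat.cast_nonneg _)
  have hbelow : ∀ i, x i < 2 ^ N * s := by
    intro i
    by_contra! hi
    have hone : (1 : ℝ) ≤ #{i | 2 ^ N * s ≤ x i} := by
      exact_mod_cast card_pos.mpr ⟨i, by simpa using hi⟩
    have hN4 : (N : ℝ) < 4 ^ N := by exact_mod_cast Nat.lt_pow_self (by norm_num)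
    have := (h N le_rfl).trans_le ((div_le_one (by positivity)).mpr hN4.le)
    linarith
  have hcounts : ∑ j ∈ range N, 2 ^ j * (#{i | 2 ^ j * s ≤ x i} : ℝ) ≤ 2 * N :=
    calc ∑ j ∈ range N, 2 ^ j * (#{i | 2 ^ j * s ≤ x i} : ℝ)
        ≤ ∑ j ∈ range N, 2 ^ j * ((N : ℝ) / 4 ^ j) :=
          sum_le_sum fun j hj =>
            mul_le_mul_of_nonneg_left (h j (mem_range.mp hj).le).le (by positivity)
      _ = N * ∑ j ∈ range N, (1 / 2 : ℝ) ^ j := by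
          rw [mul_sum]
          refine sum_congr rfl fun j _ => ?_
          rw [show (4 : ℝ) ^ j = 2 ^ j * 2 ^ j by rw [← mul_pow]; norm_num]
          field_simp
          rw [← mul_pow]; norm_num
      _ ≤ 2 * N := by nlinarith [sum_geometric_two_le N]
  nlinarith [sum_le_dyadic_counts x hs hbelow]

lemma mul_measureReal_sum_indicator_ge_le {Ω : Type*} [MeasurableSpace Ω] (μ : Measure Ω)
    [IsFiniteMeasure μ] {B : ι → Set Ω} (hB : ∀ i, MeasurableSet (B i)) (b : ℝ) :
    b * μ.real {ω | b ≤ ∑ i, (B i).indicator 1 ω} ≤ ∑ i, μ.real (B i) := by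
  have hint : ∀ i, Integrable ((B i).indicator 1) μ := fun i =>
    (integrable_const (1 : ℝ)).indicator (hB i)
  calc b * μ.real {ω | b ≤ ∑ i, (B i).indicator 1 ω}
      ≤ ∫ ω, ∑ i, (B i).indicator 1 ω ∂μ :=
        mul_meas_ge_le_integral_of_nonneg
          (.of_forall fun ω => sum_nonneg fun i _ => (B i).indicator_nonneg (by simp) ω)
          (integrable_finsetSum _ fun i _ => hint i) b
    _ = ∑ i, μ.real (B i) := by
        rw [integral_finsetSum _ fun i _ => hint i]
        exact sum_congr rfl fun i _ => integral_indicator_one (hB i)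

theorem measureReal_sum_ge_le_of_stretchedExp_tail [Nonempty ι] {Ω : Type*} [MeasurableSpace Ω]
    (μ : Measure Ω) [IsFiniteMeasure μ] {X : ι → Ω → ℝ} (hX : ∀ i, Measurable (X i))
    {c₁ c₂ α : ℝ} (hc₁ : 0 ≤ c₁) (hα : 0 < α)
    (htail : ∀ i, ∀ t : ℝ, 0 < t → μ.real {ω | t ≤ X i ω} ≤ c₁ * exp (-(c₂ * t ^ α)))
    {s : ℝ} (hs : 0 < s) (hsα : 3 / α ≤ c₂ * s ^ α) :
    μ.real {ω | 4 * s * Fintype.card ι ≤ ∑ i, X i ω} ≤ 2 * c₁ * exp (-(c₂ * s ^ α)) := by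
  set N := Fintype.card ι
  have hN : (0 : ℝ) < N := by exact_mod_cast Fintype.card_pos
  let B : ℕ → ι → Set Ω := fun k i => {ω | 2 ^ k * s ≤ X i ω}
  let E : ℕ → Set Ω := fun k => {ω | (N : ℝ) / 4 ^ k ≤ ∑ i, (B k i).indicator 1 ω}
  have hlevel : ∀ k, μ.real (E k) ≤ 4 ^ k * (c₁ * exp (-((2 ^ k : ℝ) ^ α * (c₂ * s ^ α)))) := by
    intro k
    set p := c₁ * exp (-((2 ^ k : ℝ) ^ α * (c₂ * s ^ α)))
    have hB : ∀ i, μ.real (B k i) ≤ p := fun i => (htail i _ (by positivity)).trans_eq <| by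
      rw [mul_rpow (by positivity) hs.le, mul_left_comm]
    have hmarkov : N / 4 ^ k * μ.real (E k) ≤ N * p := by
      have := (mul_measureReal_sum_indicator_ge_le μ
        (fun i => measurableSet_le measurable_const (hX i)) (N / 4 ^ k)).trans
        (sum_le_sum fun i _ => hB i)
      rwa [sum_const, card_univ, nsmul_eq_mul] at this
    refine le_of_mul_le_mul_left ?_ hN
    calc N * μ.real (E k) = 4 ^ k * (N / 4 ^ k * μ.real (E k)) := by field_simp
      _ ≤ 4 ^ k * (N * p) := by gcongr
      _ = N * (4 ^ k * p) := by ring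
  have hcover : {ω | 4 * s * N ≤ ∑ i, X i ω} ⊆ ⋃ k ∈ range (N + 1), E k := by
    intro ω hω
    obtain ⟨k, hk, hlev⟩ := exists_dyadic_level (X · ω) hs hω
    refine Set.mem_biUnion (mem_range.mpr (Nat.lt_succ_of_le hk)) ?_
    simp only [E, B, Set.mem_ofPred_eq, Set.indicator_apply, Pi.one_apply]
    rwa [← natCast_card_filter]
  calc μ.real {ω | 4 * s * N ≤ ∑ i, X i ω}
      ≤ ∑ k ∈ range (N + 1), μ.real (E k) :=
        (measureReal_mono hcover (measure_ne_top _ _)).trans (measureReal_biUnion_finset_le _ _)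
    _ ≤ ∑ k ∈ range (N + 1), c₁ * (4 ^ k * exp (-((2 ^ k : ℝ) ^ α * (c₂ * s ^ α)))) :=
        sum_le_sum fun k _ => (hlevel k).trans_eq (mul_left_comm _ _ _)
    _ ≤ c₁ * (2 * exp (-(c₂ * s ^ α))) := by
        rw [← mul_sum]; gcongr; exact sum_four_pow_mul_exp_neg_le hα hsα _
    _ = 2 * c₁ * exp (-(c₂ * s ^ α)) := by ring

end DyadicLevels

/-- **Tail bound for averages of variables with stretched-exponential tails**
(Claim 3.12). -/
theorem average_stretched_exponential_tail (c₁ c₂ α : ℝ)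
    (hc₁ : 0 < c₁) (hc₂ : 0 < c₂) (hα : 0 < α) :
    ∃ C c : ℝ, 0 < C ∧ 0 < c ∧
      ∀ (Ω : Type*) [MeasurableSpace Ω] (P : Measure Ω) [IsProbabilityMeasure P]
        (N : ℕ), 1 ≤ N → ∀ X : Fin N → Ω → ℝ,
        (∀ i, Measurable (X i)) → (∀ i ω, 0 ≤ X i ω) →
        (∀ i, ∀ t : ℝ, 0 < t →
          (P {ω | t ≤ X i ω}).toReal ≤ c₁ * Real.exp (-(c₂ * t ^ α))) →
        ∀ t : ℝ, 0 < t →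
          (P {ω | t ≤ (1 / (N : ℝ)) * ∑ i, X i ω}).toReal ≤
            C * Real.exp (-(c * t ^ α)) := by
  refine ⟨2 * c₁ + exp (3 / α), c₂ / 4 ^ α, by positivity, by positivity, ?_⟩
  intro Ω _ P _ N hN X hX _ htail t ht
  have : Nonempty (Fin N) := Fin.pos_iff_nonempty.mp hN
  have hscale : c₂ / 4 ^ α * t ^ α = c₂ * (t / 4) ^ α := by
    rw [div_rpow ht.le (by norm_num)]; ring
  rw [hscale, ← measureReal_def]
  by_cases hu : 3 / α ≤ c₂ * (t / 4) ^ α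
  · have hevent : {ω | t ≤ 1 / (N : ℝ) * ∑ i, X i ω} =
        {ω | 4 * (t / 4) * Fintype.card (Fin N) ≤ ∑ i, X i ω} := by
      ext ω
      simp only [Set.mem_ofPred_eq, Fintype.card_fin, one_div, mul_div_cancel₀ _ (four_ne_zero' ℝ)]
      rw [le_inv_mul_iff₀ (by positivity), mul_comm]
    rw [hevent]
    calc _ ≤ 2 * c₁ * exp (-(c₂ * (t / 4) ^ α)) :=
          measureReal_sum_ge_le_of_stretchedExp_tail P hX hc₁.le hα htail (by positivity) hu
      _ ≤ _ := by gcongr; linarith [exp_pos (3 / α)]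
  · calc P.real _ ≤ 1 := measureReal_le_one
      _ = exp (3 / α) * exp (-(3 / α)) := by rw [← exp_add]; simp
      _ ≤ (2 * c₁ + exp (3 / α)) * exp (-(c₂ * (t / 4) ^ α)) := by
          gcongr <;> linarith
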